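/- Let U, V, X, Y, Z be random variables on finite spaces forming a Markov chain U → V → X → (Y,Z). Then I(Y;V|U) − I(Z;V|U) + H(X|Z,V) = H(X|Y,V) + I(X;Y|U) − I(X;Z|U). -/
import Mathlib


open scoped BigOperators Classical

variable {Ω : Type} [Fintype Ω]

/-- Probability that the random variable `X` takes the value `x` under the pmf `p`. -/
noncomputable def prEq {α : Type} (p : Ω → ℝ) (X : Ω → α) (x : α) : ℝ :=
  ∑ ω, if X ω = x then p ω else 0

/-- Shannon entropy of a finite random variable. -/
noncomputable def ent {α : Type} [Fintype α] (p : Ω → ℝ) (X : Ω → α) : ℝ :=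
  ∑ x, Real.negMulLog (prEq p X x)

/-- Conditional Shannon entropy `H(X | Y)`. -/
noncomputable def condEnt {α β : Type} [Fintype α] [Fintype β]
    (p : Ω → ℝ) (X : Ω → α) (Y : Ω → β) : ℝ :=
  ent p (fun ω => (X ω, Y ω)) - ent p Y

/-- Mutual information `I(X ; Y)`. -/
noncomputable def mutInf {α β : Type} [Fintype α] [Fintype β]
    (p : Ω → ℝ) (X : Ω → α) (Y : Ω → β) : ℝ :=
  ent p X + ent p Y - ent p (fun ω => (X ω, Y ω))

/-- Conditional mutual information `I(X ; Y | Z)`. -/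
noncomputable def condMutInf {α β γ : Type} [Fintype α] [Fintype β] [Fintype γ]
    (p : Ω → ℝ) (X : Ω → α) (Y : Ω → β) (Z : Ω → γ) : ℝ :=
  condEnt p X Z - condEnt p X (fun ω => (Y ω, Z ω))

/-- `X` and `Y` are conditionally independent given `Z`. -/
def CondIndep {α β γ : Type} (p : Ω → ℝ) (X : Ω → α) (Y : Ω → β) (Z : Ω → γ) : Prop :=
  ∀ x y z,
    prEq p (fun ω => (X ω, Y ω, Z ω)) (x, y, z) * prEq p Z z =
      prEq p (fun ω => (X ω, Z ω)) (x, z) * prEq p (fun ω => (Y ω, Z ω)) (y, z)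

/-- `X` and `Y` are independent. -/
def Indep {α β : Type} (p : Ω → ℝ) (X : Ω → α) (Y : Ω → β) : Prop :=
  ∀ x y, prEq p (fun ω => (X ω, Y ω)) (x, y) = prEq p X x * prEq p Y y

/-- `p` is a probability mass function on `Ω`. -/
def IsPMF (p : Ω → ℝ) : Prop := (∀ ω, 0 ≤ p ω) ∧ ∑ ω, p ω = 1

section H
variable {Ω : Type} [Fintype Ω]

lemma prEq_nonneg {α : Type} (p : Ω → ℝ) (hp : ∀ ω, 0 ≤ p ω) (W : Ω → α) (x : α) :
    0 ≤ prEq p W x :=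
  Finset.sum_nonneg fun ω _ => by split <;> simp [hp ω]

lemma prEq_comp {α β : Type} [Fintype α] (p : Ω → ℝ) (W : Ω → α) (G : α → β) (y : β) :
    prEq p (fun ω => G (W ω)) y = ∑ a, if G a = y then prEq p W a else 0 := by
  unfold prEq
  have h : ∀ a : α, (if G a = y then ∑ ω, if W ω = a then p ω else 0 else 0)
      = ∑ ω, if W ω = a then (if G a = y then p ω else 0) else 0 := by
    intro a; split_ifs with h <;> simp [h]
  simp only [h]
  rw [Finset.sum_comm]
  refine Finset.sum_congr rfl fun ω _ => ?_
  simp [Finset.sum_ite_eq]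

lemma ent_comp_inj {α β : Type} [Fintype α] [Fintype β] (p : Ω → ℝ) (W : Ω → α)
    (F : α → β) (hF : Function.Injective F) :
    ent p (fun ω => F (W ω)) = ent p W := by
  unfold ent
  rw [← Finset.sum_subset (Finset.subset_univ (Finset.image F Finset.univ))
      (fun y _ hy => ?_), Finset.sum_image (fun a _ b _ hab => hF hab)]
  · refine Finset.sum_congr rfl fun a _ => ?_
    congr 1
    unfold prEq
    exact Finset.sum_congr rfl fun ω _ => by simp [hF.eq_iff]
  · have : prEq p (fun ω => F (W ω)) y = 0 := by
      unfold prEq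
      refine Finset.sum_eq_zero fun ω _ => ?_
      have : F (W ω) ≠ y := fun hc => hy (Finset.mem_image.2 ⟨W ω, Finset.mem_univ _, hc⟩)
      simp [this]
    simp [this]

end H
section H

open Real

lemma slice_identity {α β : Type} [Fintype α] [Fintype β] (r : α → β → ℝ)
    (h0 : ∀ a b, 0 ≤ r a b)
    (hfac : ∀ a b, r a b * (∑ a', ∑ b', r a' b') = (∑ b', r a b') * (∑ a', r a' b)) :
    (∑ a, ∑ b, Real.negMulLog (r a b)) + Real.negMulLog (∑ a, ∑ b, r a b)
      = (∑ a, Real.negMulLog (∑ b, r a b)) + (∑ b, Real.negMulLog (∑ a, r a b)) := by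
  have hA0 : ∀ a, 0 ≤ ∑ b, r a b := fun a => Finset.sum_nonneg fun b _ => h0 a b
  have hB0 : ∀ b, 0 ≤ ∑ a, r a b := fun b => Finset.sum_nonneg fun a _ => h0 a b
  have key : ∀ a b, Real.negMulLog (r a b) - r a b * Real.log (∑ a', ∑ b', r a' b')
      = -(r a b * Real.log (∑ b', r a b')) + -(r a b * Real.log (∑ a', r a' b)) := by
    intro a b
    rcases eq_or_lt_of_le (h0 a b) with hz | hpos
    · simp [← hz]
    · have hA : 0 < ∑ b', r a b' :=
        lt_of_lt_of_le hpos (Finset.single_le_sum (fun b' _ => h0 a b') (Finset.mem_univ b))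
      have hB : 0 < ∑ a', r a' b :=
        lt_of_lt_of_le hpos (Finset.single_le_sum (fun a' _ => h0 a' b) (Finset.mem_univ a))
      have hC : 0 < ∑ a', ∑ b', r a' b' :=
        lt_of_lt_of_le hA (Finset.single_le_sum (fun a' _ => hA0 a') (Finset.mem_univ a))
      have hlog : Real.log (r a b) + Real.log (∑ a', ∑ b', r a' b')
          = Real.log (∑ b', r a b') + Real.log (∑ a', r a' b) := by
        rw [← Real.log_mul hpos.ne' hC.ne', ← Real.log_mul hA.ne' hB.ne', hfac a b]
      rw [Real.negMulLog_def]
      linear_combination (-(r a b)) * hlog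
  have e : (∑ a', ∑ b', r a' b') * Real.log (∑ a', ∑ b', r a' b')
      = ∑ a, ∑ b, r a b * Real.log (∑ a', ∑ b', r a' b') := by
    rw [Finset.sum_mul]
    exact Finset.sum_congr rfl fun a _ => Finset.sum_mul _ _ _
  have expand : (∑ a, ∑ b, Real.negMulLog (r a b)) + Real.negMulLog (∑ a, ∑ b, r a b)
      = ∑ a, ∑ b, (Real.negMulLog (r a b) - r a b * Real.log (∑ a', ∑ b', r a' b')) := by
    simp only [Finset.sum_sub_distrib, Real.negMulLog_def]
    linarith [e]
  rw [expand, Finset.sum_congr rfl fun a _ => Finset.sum_congr rfl fun b _ => key a b]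
  have splitsum : (∑ a, ∑ b, (-(r a b * Real.log (∑ b', r a b')) + -(r a b * Real.log (∑ a', r a' b))))
      = (∑ a, ∑ b, -(r a b * Real.log (∑ b', r a b'))) + (∑ a, ∑ b, -(r a b * Real.log (∑ a', r a' b))) := by
    simp [Finset.sum_add_distrib]
  rw [splitsum]
  congr 1
  · refine Finset.sum_congr rfl fun a _ => ?_
    show _ = -(∑ b, r a b) * Real.log (∑ b, r a b)
    rw [neg_mul, Finset.sum_mul]
    simp
  · rw [Finset.sum_comm]
    refine Finset.sum_congr rfl fun b _ => ?_
    show _ = -(∑ a, r a b) * Real.log (∑ a, r a b)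
    rw [neg_mul, Finset.sum_mul]
    simp

end H
section H2
variable {Ω : Type} [Fintype Ω]

lemma marg_C {α β γ : Type} [Fintype α] [Fintype β] [Fintype γ] (p : Ω → ℝ)
    (A : Ω → α) (B : Ω → β) (C : Ω → γ) (c : γ) :
    prEq p C c = ∑ a, ∑ b, prEq p (fun ω => (A ω, B ω, C ω)) (a, b, c) := by
  refine (prEq_comp p (fun ω => (A ω, B ω, C ω)) (fun t => t.2.2) c).trans ?_
  simp only [Fintype.sum_prod_type]
  refine Finset.sum_congr rfl fun a _ => Finset.sum_congr rfl fun b _ => ?_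
  simp [Finset.sum_ite_eq']

lemma marg_AC {α β γ : Type} [Fintype α] [Fintype β] [Fintype γ] (p : Ω → ℝ)
    (A : Ω → α) (B : Ω → β) (C : Ω → γ) (a : α) (c : γ) :
    prEq p (fun ω => (A ω, C ω)) (a, c) = ∑ b, prEq p (fun ω => (A ω, B ω, C ω)) (a, b, c) := by
  refine (prEq_comp p (fun ω => (A ω, B ω, C ω)) (fun t => (t.1, t.2.2)) (a, c)).trans ?_
  simp only [Fintype.sum_prod_type]
  rw [Finset.sum_eq_single a]
  · refine Finset.sum_congr rfl fun b _ => ?_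
    simp [Prod.ext_iff, Finset.sum_ite_eq']
  · intro a' _ ha'
    refine Finset.sum_eq_zero fun b _ => Finset.sum_eq_zero fun c' _ => ?_
    simp [Prod.ext_iff, ha']
  · simp

lemma marg_BC {α β γ : Type} [Fintype α] [Fintype β] [Fintype γ] (p : Ω → ℝ)
    (A : Ω → α) (B : Ω → β) (C : Ω → γ) (b : β) (c : γ) :
    prEq p (fun ω => (B ω, C ω)) (b, c) = ∑ a, prEq p (fun ω => (A ω, B ω, C ω)) (a, b, c) := by
  refine (prEq_comp p (fun ω => (A ω, B ω, C ω)) (fun t => (t.2.1, t.2.2)) (b, c)).trans ?_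
  simp only [Fintype.sum_prod_type]
  refine Finset.sum_congr rfl fun a _ => ?_
  rw [Finset.sum_eq_single b]
  · simp [Prod.ext_iff, Finset.sum_ite_eq']
  · intro b' _ hb'
    refine Finset.sum_eq_zero fun c' _ => ?_
    simp [Prod.ext_iff, hb']
  · simp

lemma ent_condIndep {α β γ : Type} [Fintype α] [Fintype β] [Fintype γ]
    (p : Ω → ℝ) (hp : ∀ ω, 0 ≤ p ω) (A : Ω → α) (B : Ω → β) (C : Ω → γ)
    (h : CondIndep p A B C) :
    ent p (fun ω => (A ω, B ω, C ω)) + ent p C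
      = ent p (fun ω => (A ω, C ω)) + ent p (fun ω => (B ω, C ω)) := by
  have eswap3 : ∀ f : α × β × γ → ℝ, ∑ t, f t = ∑ c, ∑ a, ∑ b, f (a, b, c) := by
    intro f
    rw [← Equiv.sum_comp
      (⟨fun t : γ × α × β => (t.2.1, t.2.2, t.1), fun t => (t.2.2, t.1, t.2.1),
        fun ⟨c, a, b⟩ => rfl, fun ⟨a, b, c⟩ => rfl⟩ : γ × α × β ≃ α × β × γ) f]
    simp [Fintype.sum_prod_type]
  have eswap2 : ∀ {δ : Type} [Fintype δ] (f : δ × γ → ℝ), ∑ t, f t = ∑ c, ∑ d, f (d, c) := by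
    intro δ _ f
    rw [← Equiv.sum_comp (Equiv.prodComm γ δ) f]
    simp [Fintype.sum_prod_type]
  unfold ent
  rw [eswap3 (fun t => Real.negMulLog (prEq p (fun ω => (A ω, B ω, C ω)) t)),
      eswap2 (fun t => Real.negMulLog (prEq p (fun ω => (A ω, C ω)) t)),
      eswap2 (fun t => Real.negMulLog (prEq p (fun ω => (B ω, C ω)) t)),
      ← Finset.sum_add_distrib, ← Finset.sum_add_distrib]
  refine Finset.sum_congr rfl fun c _ => ?_
  have mC := marg_C p A B C c
  rw [mC]
  have : ∀ a, Real.negMulLog (prEq p (fun ω => (A ω, C ω)) (a, c))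
      = Real.negMulLog (∑ b, prEq p (fun ω => (A ω, B ω, C ω)) (a, b, c)) := fun a => by
    rw [marg_AC p A B C a c]
  rw [Finset.sum_congr rfl fun a _ => this a]
  have : ∀ b, Real.negMulLog (prEq p (fun ω => (B ω, C ω)) (b, c))
      = Real.negMulLog (∑ a, prEq p (fun ω => (A ω, B ω, C ω)) (a, b, c)) := fun b => by
    rw [marg_BC p A B C b c]
  rw [Finset.sum_congr rfl fun b _ => this b]
  refine slice_identity (fun a b => prEq p (fun ω => (A ω, B ω, C ω)) (a, b, c))
    (fun a b => prEq_nonneg p hp _ _) (fun a b => ?_)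
  have hh := h a b c
  rw [marg_C p A B C c, marg_AC p A B C a c, marg_BC p A B C b c] at hh
  exact hh

end H2
section H3
variable {Ω : Type} [Fintype Ω]

lemma condIndep_map {α β γ α' β' : Type} [Fintype α] [Fintype β] [Fintype γ]
    (p : Ω → ℝ) (A : Ω → α) (B : Ω → β) (C : Ω → γ)
    (h : CondIndep p A B C) (f : α → α') (g : β → β') :
    CondIndep p (fun ω => f (A ω)) (fun ω => g (B ω)) C := by
  intro a' b' c
  have e1 : prEq p (fun ω => (f (A ω), g (B ω), C ω)) (a', b', c)
      = ∑ a, ∑ b, if f a = a' ∧ g b = b'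
          then prEq p (fun ω => (A ω, B ω, C ω)) (a, b, c) else 0 := by
    refine (prEq_comp p (fun ω => (A ω, B ω, C ω))
      (fun t => (f t.1, g t.2.1, t.2.2)) (a', b', c)).trans ?_
    simp only [Fintype.sum_prod_type]
    refine Finset.sum_congr rfl fun a _ => Finset.sum_congr rfl fun b _ => ?_
    by_cases h1 : f a = a' <;> by_cases h2 : g b = b' <;>
      simp [Prod.ext_iff, h1, h2, Finset.sum_ite_eq']
  have e2 : prEq p (fun ω => (f (A ω), C ω)) (a', c)
      = ∑ a, if f a = a' then prEq p (fun ω => (A ω, C ω)) (a, c) else 0 := by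
    refine (prEq_comp p (fun ω => (A ω, C ω)) (fun t => (f t.1, t.2)) (a', c)).trans ?_
    simp only [Fintype.sum_prod_type]
    refine Finset.sum_congr rfl fun a _ => ?_
    by_cases h1 : f a = a' <;> simp [Prod.ext_iff, h1, Finset.sum_ite_eq']
  have e3 : prEq p (fun ω => (g (B ω), C ω)) (b', c)
      = ∑ b, if g b = b' then prEq p (fun ω => (B ω, C ω)) (b, c) else 0 := by
    refine (prEq_comp p (fun ω => (B ω, C ω)) (fun t => (g t.1, t.2)) (b', c)).trans ?_
    simp only [Fintype.sum_prod_type]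
    refine Finset.sum_congr rfl fun b _ => ?_
    by_cases h1 : g b = b' <;> simp [Prod.ext_iff, h1, Finset.sum_ite_eq']
  show prEq p (fun ω => (f (A ω), g (B ω), C ω)) (a', b', c) * prEq p C c
      = prEq p (fun ω => (f (A ω), C ω)) (a', c) * prEq p (fun ω => (g (B ω), C ω)) (b', c)
  rw [e1, e2, e3, Finset.sum_mul_sum, Finset.sum_mul]
  refine Finset.sum_congr rfl fun a _ => ?_
  rw [Finset.sum_mul]
  refine Finset.sum_congr rfl fun b _ => ?_
  by_cases h1 : f a = a' <;> by_cases h2 : g b = b' <;> simp [h1, h2, h a b c]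

end H3
theorem stmt2 {𝓤 𝓥 𝓧 𝓨 𝓩 : Type} [Fintype 𝓤] [Fintype 𝓥] [Fintype 𝓧] [Fintype 𝓨] [Fintype 𝓩]
    (p : Ω → ℝ) (hp : IsPMF p)
    (U : Ω → 𝓤) (V : Ω → 𝓥) (X : Ω → 𝓧) (Y : Ω → 𝓨) (Z : Ω → 𝓩)
    (hmc1 : CondIndep p U (fun ω => (X ω, Y ω, Z ω)) V)
    (hmc2 : CondIndep p (fun ω => (U ω, V ω)) (fun ω => (Y ω, Z ω)) X) :
    condMutInf p Y V U - condMutInf p Z V U + condEnt p X (fun ω => (Z ω, V ω)) =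
      condEnt p X (fun ω => (Y ω, V ω)) + condMutInf p X Y U - condMutInf p X Z U := by
  obtain ⟨hp0, -⟩ := hp
  have h1 : CondIndep p U Y V :=
    condIndep_map p U (fun ω => (X ω, Y ω, Z ω)) V hmc1 id (fun t => t.2.1)
  have h2 : CondIndep p U Z V :=
    condIndep_map p U (fun ω => (X ω, Y ω, Z ω)) V hmc1 id (fun t => t.2.2)
  have h3 : CondIndep p U Y X :=
    condIndep_map p (fun ω => (U ω, V ω)) (fun ω => (Y ω, Z ω)) X hmc2 Prod.fst Prod.fst
  have h4 : CondIndep p U Z X :=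
    condIndep_map p (fun ω => (U ω, V ω)) (fun ω => (Y ω, Z ω)) X hmc2 Prod.fst Prod.snd
  have h5 : CondIndep p V Y X :=
    condIndep_map p (fun ω => (U ω, V ω)) (fun ω => (Y ω, Z ω)) X hmc2 Prod.snd Prod.fst
  have h6 : CondIndep p V Z X :=
    condIndep_map p (fun ω => (U ω, V ω)) (fun ω => (Y ω, Z ω)) X hmc2 Prod.snd Prod.snd
  have E1 := ent_condIndep p hp0 U Y V h1
  have E2 := ent_condIndep p hp0 U Z V h2
  have E3 := ent_condIndep p hp0 U Y X h3
  have E4 := ent_condIndep p hp0 U Z X h4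
  have E5 := ent_condIndep p hp0 V Y X h5
  have E6 := ent_condIndep p hp0 V Z X h6
  have R1 : ent p (fun ω => (Y ω, V ω, U ω)) = ent p (fun ω => (U ω, Y ω, V ω)) :=
    ent_comp_inj p (fun ω => (U ω, Y ω, V ω)) (fun t => (t.2.1, t.2.2, t.1))
      (⟨fun t : 𝓤 × 𝓨 × 𝓥 => ((t.2.1, t.2.2, t.1) : 𝓨 × 𝓥 × 𝓤),
        fun t => (t.2.2, t.1, t.2.1), fun ⟨a, b, c⟩ => rfl, fun ⟨a, b, c⟩ => rfl⟩ :
        𝓤 × 𝓨 × 𝓥 ≃ 𝓨 × 𝓥 × 𝓤).injective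
  have R2 : ent p (fun ω => (Z ω, V ω, U ω)) = ent p (fun ω => (U ω, Z ω, V ω)) :=
    ent_comp_inj p (fun ω => (U ω, Z ω, V ω)) (fun t => (t.2.1, t.2.2, t.1))
      (⟨fun t : 𝓤 × 𝓩 × 𝓥 => ((t.2.1, t.2.2, t.1) : 𝓩 × 𝓥 × 𝓤),
        fun t => (t.2.2, t.1, t.2.1), fun ⟨a, b, c⟩ => rfl, fun ⟨a, b, c⟩ => rfl⟩ :
        𝓤 × 𝓩 × 𝓥 ≃ 𝓩 × 𝓥 × 𝓤).injective
  have R3 : ent p (fun ω => (X ω, Y ω, U ω)) = ent p (fun ω => (U ω, Y ω, X ω)) :=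
    ent_comp_inj p (fun ω => (U ω, Y ω, X ω)) (fun t => (t.2.2, t.2.1, t.1))
      (⟨fun t : 𝓤 × 𝓨 × 𝓧 => ((t.2.2, t.2.1, t.1) : 𝓧 × 𝓨 × 𝓤),
        fun t => (t.2.2, t.2.1, t.1), fun ⟨a, b, c⟩ => rfl, fun ⟨a, b, c⟩ => rfl⟩ :
        𝓤 × 𝓨 × 𝓧 ≃ 𝓧 × 𝓨 × 𝓤).injective
  have R4 : ent p (fun ω => (X ω, Z ω, U ω)) = ent p (fun ω => (U ω, Z ω, X ω)) :=
    ent_comp_inj p (fun ω => (U ω, Z ω, X ω)) (fun t => (t.2.2, t.2.1, t.1))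
      (⟨fun t : 𝓤 × 𝓩 × 𝓧 => ((t.2.2, t.2.1, t.1) : 𝓧 × 𝓩 × 𝓤),
        fun t => (t.2.2, t.2.1, t.1), fun ⟨a, b, c⟩ => rfl, fun ⟨a, b, c⟩ => rfl⟩ :
        𝓤 × 𝓩 × 𝓧 ≃ 𝓧 × 𝓩 × 𝓤).injective
  have R5 : ent p (fun ω => (X ω, Y ω, V ω)) = ent p (fun ω => (V ω, Y ω, X ω)) :=
    ent_comp_inj p (fun ω => (V ω, Y ω, X ω)) (fun t => (t.2.2, t.2.1, t.1))
      (⟨fun t : 𝓥 × 𝓨 × 𝓧 => ((t.2.2, t.2.1, t.1) : 𝓧 × 𝓨 × 𝓥),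
        fun t => (t.2.2, t.2.1, t.1), fun ⟨a, b, c⟩ => rfl, fun ⟨a, b, c⟩ => rfl⟩ :
        𝓥 × 𝓨 × 𝓧 ≃ 𝓧 × 𝓨 × 𝓥).injective
  have R6 : ent p (fun ω => (X ω, Z ω, V ω)) = ent p (fun ω => (V ω, Z ω, X ω)) :=
    ent_comp_inj p (fun ω => (V ω, Z ω, X ω)) (fun t => (t.2.2, t.2.1, t.1))
      (⟨fun t : 𝓥 × 𝓩 × 𝓧 => ((t.2.2, t.2.1, t.1) : 𝓧 × 𝓩 × 𝓥),
        fun t => (t.2.2, t.2.1, t.1), fun ⟨a, b, c⟩ => rfl, fun ⟨a, b, c⟩ => rfl⟩ :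
        𝓥 × 𝓩 × 𝓧 ≃ 𝓧 × 𝓩 × 𝓥).injective
  have S1 : ent p (fun ω => (X ω, U ω)) = ent p (fun ω => (U ω, X ω)) :=
    ent_comp_inj p (fun ω => (U ω, X ω)) (fun t => (t.2, t.1)) (Equiv.prodComm 𝓤 𝓧).injective
  have S2 : ent p (fun ω => (V ω, U ω)) = ent p (fun ω => (U ω, V ω)) :=
    ent_comp_inj p (fun ω => (U ω, V ω)) (fun t => (t.2, t.1)) (Equiv.prodComm 𝓤 𝓥).injective
  have S3 : ent p (fun ω => (Y ω, X ω)) = ent p (fun ω => (X ω, Y ω)) :=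
    ent_comp_inj p (fun ω => (X ω, Y ω)) (fun t => (t.2, t.1)) (Equiv.prodComm 𝓧 𝓨).injective
  simp only [condMutInf, condEnt]
  linarith [E1, E2, E3, E4, E5, E6, R1, R2, R3, R4, R5, R6, S1, S2, S3]
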